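/- A homogeneous projective plane has degree at most 4; in particular it is finite. -/

import Mathlib

open Set Function

universe u v w

/-- A linear space: a set of points with a family of lines, each line having at
least 2 points, such that any two distinct points lie on a common line and any
two distinct lines meet in at most one point. -/
structure LinSpace (X : Type u) where
  lines : Set (Set X)
  two_le : ∀ L ∈ lines, 2 ≤ L.encard
  exists_line : ∀ x y : X, x ≠ y → ∃ L ∈ lines, x ∈ L ∧ y ∈ L
  inter_subsingleton : ∀ L₁ ∈ lines, ∀ L₂ ∈ lines, L₁ ≠ L₂ → (L₁ ∩ L₂).Subsingleton

/-- Collinearity of three points. -/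
def Collin {X : Type u} (A : LinSpace X) (x y z : X) : Prop :=
  ∃ L ∈ A.lines, x ∈ L ∧ y ∈ L ∧ z ∈ L

/-- An embedding of linear spaces: an injection preserving and reflecting collinearity. -/
def IsEmbedding {X : Type u} {Y : Type v} (A : LinSpace X) (B : LinSpace Y) (f : X → Y) : Prop :=
  Function.Injective f ∧ ∀ x y z : X, Collin A x y z ↔ Collin B (f x) (f y) (f z)

/-- The linear space has degree at most `n`: every line has at most `n` points
and every point lies on at most `n` lines. -/
def DegLE {X : Type u} (A : LinSpace X) (n : ℕ) : Prop :=
  (∀ L ∈ A.lines, L.encard ≤ (n : ℕ∞)) ∧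
  ∀ p : X, {L | L ∈ A.lines ∧ p ∈ L}.encard ≤ (n : ℕ∞)

/-- There exist four points, no three of which are collinear. -/
def FourIndep {X : Type u} (A : LinSpace X) : Prop :=
  ∃ a b c d : X, a ≠ b ∧ a ≠ c ∧ a ≠ d ∧ b ≠ c ∧ b ≠ d ∧ c ≠ d ∧
    ∀ p q r : X, p ∈ ({a, b, c, d} : Set X) → q ∈ ({a, b, c, d} : Set X) →
      r ∈ ({a, b, c, d} : Set X) → p ≠ q → p ≠ r → q ≠ r → ¬ Collin A p q r

/-- A projective plane: every two lines intersect, and there are four points no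
three of which are collinear. -/
def IsProjPlane {X : Type u} (A : LinSpace X) : Prop :=
  (∀ L₁ ∈ A.lines, ∀ L₂ ∈ A.lines, (L₁ ∩ L₂).Nonempty) ∧ FourIndep A

/-- An automorphism of a linear space. -/
def IsAuto {X : Type u} (A : LinSpace X) (g : X → X) : Prop :=
  Function.Bijective g ∧ ∀ x y z : X, Collin A x y z ↔ Collin A (g x) (g y) (g z)

/-- A homogeneous linear space: every isomorphism between finite subspaces
extends to an automorphism. -/
def Homogeneous {X : Type u} (A : LinSpace X) : Prop :=
  ∀ S : Set X, S.Finite → ∀ f : X → X, Set.InjOn f S →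
    (∀ x ∈ S, ∀ y ∈ S, ∀ z ∈ S, (Collin A x y z ↔ Collin A (f x) (f y) (f z))) →
    ∃ g : X → X, IsAuto A g ∧ ∀ x ∈ S, g x = f x

/-- The Fano plane: the unique projective plane of order 2 (7 points, every line
has exactly 3 points). -/
def IsFano {X : Type u} (A : LinSpace X) : Prop :=
  IsProjPlane A ∧ (∀ L ∈ A.lines, L.encard = 3) ∧ (Set.univ : Set X).encard = 7

/-- The projective plane over F₃: the unique projective plane of order 3
(13 points, every line has exactly 4 points). -/
def IsPG2_3 {X : Type u} (A : LinSpace X) : Prop :=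
  IsProjPlane A ∧ (∀ L ∈ A.lines, L.encard = 4) ∧ (Set.univ : Set X).encard = 13

/-- The planar closure of a set `S` in a linear space `B`: the closure of `S`
under adding intersection points of pairs of lines spanned by the closure. -/
inductive PlanarCl {Y : Type v} (B : LinSpace Y) (S : Set Y) : Y → Prop
  | base {p : Y} (hp : p ∈ S) : PlanarCl B S p
  | inter {p : Y} (L₁ L₂ : Set Y) (p₁ q₁ p₂ q₂ : Y)
      (hL₁ : L₁ ∈ B.lines) (hL₂ : L₂ ∈ B.lines) (hne : L₁ ≠ L₂)
      (hpq₁ : p₁ ≠ q₁) (hp₁ : p₁ ∈ L₁) (hq₁ : q₁ ∈ L₁)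
      (hpq₂ : p₂ ≠ q₂) (hp₂ : p₂ ∈ L₂) (hq₂ : q₂ ∈ L₂)
      (cp₁ : PlanarCl B S p₁) (cq₁ : PlanarCl B S q₁)
      (cp₂ : PlanarCl B S p₂) (cq₂ : PlanarCl B S q₂)
      (hpL₁ : p ∈ L₁) (hpL₂ : p ∈ L₂) : PlanarCl B S p

/-- A planarisation: an embedding such that every point of the target lies in
the planar closure of the image (i.e. the target is obtained by successively
adding intersection points of pairs of lines). -/
def IsPlanarisation {X : Type u} {Y : Type v} (A : LinSpace X) (B : LinSpace Y) (f : X → Y) : Prop :=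
  IsEmbedding A B f ∧ ∀ y : Y, PlanarCl B (Set.range f) y

/-- An aplanar embedding: any two lines of `A` whose images intersect in `B`
already intersect in `A`. -/
def IsAplanar {X : Type u} {Y : Type v} (A : LinSpace X) (B : LinSpace Y) (f : X → Y) : Prop :=
  IsEmbedding A B f ∧
  ∀ L₁ ∈ A.lines, ∀ L₂ ∈ A.lines, ∀ M₁ ∈ B.lines, ∀ M₂ ∈ B.lines,
    f '' L₁ ⊆ M₁ → f '' L₂ ⊆ M₂ → (M₁ ∩ M₂).Nonempty → (L₁ ∩ L₂).Nonempty

/-- The induced subspace on the set `S` of points of `B` is a projective plane: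
any two induced lines (lines of `B` meeting `S` in at least two points) meet
inside `S`, and `S` contains four points no three collinear. -/
def IsProjPlaneOn {Y : Type v} (B : LinSpace Y) (S : Set Y) : Prop :=
  (∀ L₁ ∈ B.lines, ∀ L₂ ∈ B.lines,
      2 ≤ (L₁ ∩ S).encard → 2 ≤ (L₂ ∩ S).encard → (L₁ ∩ L₂ ∩ S).Nonempty) ∧
  ∃ a b c d : Y, a ∈ S ∧ b ∈ S ∧ c ∈ S ∧ d ∈ S ∧
    a ≠ b ∧ a ≠ c ∧ a ≠ d ∧ b ≠ c ∧ b ≠ d ∧ c ≠ d ∧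
    ∀ p q r : Y, p ∈ ({a, b, c, d} : Set Y) → q ∈ ({a, b, c, d} : Set Y) →
      r ∈ ({a, b, c, d} : Set Y) → p ≠ q → p ≠ r → q ≠ r → ¬ Collin B p q r

/-!
Suppose some line `L` has at least five points. All lines of a projective plane have the same
number of points, so let `N` be another line, meeting `L` in `c`, and choose `a, b, x ∈ N` and
`c₁, d ∈ L` away from `c`. The point `y = L ∩ bp`, where `p = xd ∩ ac₁`, is fixed by every
automorphism fixing `a, b, x, c₁, d`. But `{a, b, x, c₁, d, y}` lies on `N ∪ L`, so its
collinearity structure only records which points lie on `N` and which on `L`; hence moving `y`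
to a fifth point `y'` of `L` and fixing the rest is an isomorphism of finite subspaces, and
homogeneity extends it to an automorphism moving `y`. So lines have at most four points, and
projecting the lines through a point onto a line missing it gives the same bound for points.
-/

theorem Set.exists_mem_notMem_of_encard_lt_encard {α : Type*} {s t : Set α}
    (h : s.encard < t.encard) : ∃ e ∈ t, e ∉ s := by
  by_contra! hts
  exact (Set.encard_mono hts).not_gt h

namespace LinSpace

variable {X : Type u} (A : LinSpace X)

theorem eq_of_mem_of_mem {L₁ L₂ : Set X} (h₁ : L₁ ∈ A.lines) (h₂ : L₂ ∈ A.lines) {p q : X}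
    (hpq : p ≠ q) (hp₁ : p ∈ L₁) (hq₁ : q ∈ L₁) (hp₂ : p ∈ L₂) (hq₂ : q ∈ L₂) : L₁ = L₂ := by
  by_contra hne
  exact hpq (A.inter_subsingleton L₁ h₁ L₂ h₂ hne ⟨hp₁, hp₂⟩ ⟨hq₁, hq₂⟩)

theorem exists_mem_notMem_of_ne {L M : Set X} (hL : L ∈ A.lines) (hM : M ∈ A.lines)
    (hLM : L ≠ M) : ∃ z ∈ L, z ∉ M := by
  by_contra! hsub
  obtain ⟨p, q, hp, hq, hpq⟩ :=
    Set.one_lt_encard_iff.1 (lt_of_lt_of_le (by norm_num) (A.two_le L hL))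
  exact hLM (A.eq_of_mem_of_mem hL hM hpq hp hq (hsub p hp) (hsub q hq))

open Classical in
noncomputable def line (x y : X) : Set X :=
  if h : x ≠ y then (A.exists_line x y h).choose else ∅

section line

variable {A} {x y : X} (h : x ≠ y)
include h

theorem line_spec : A.line x y ∈ A.lines ∧ x ∈ A.line x y ∧ y ∈ A.line x y := by
  rw [line, dif_pos h]
  exact (A.exists_line x y h).choose_spec

theorem line_mem_lines : A.line x y ∈ A.lines := (line_spec h).1

theorem left_mem_line : x ∈ A.line x y := (line_spec h).2.1

theorem right_mem_line : y ∈ A.line x y := (line_spec h).2.2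

theorem eq_line {L : Set X} (hL : L ∈ A.lines) (hx : x ∈ L) (hy : y ∈ L) : L = A.line x y :=
  A.eq_of_mem_of_mem hL (line_mem_lines h) h hx hy (left_mem_line h) (right_mem_line h)

theorem collin_iff_mem_line {z : X} : Collin A x y z ↔ z ∈ A.line x y := by
  constructor
  · rintro ⟨L, hL, hx, hy, hz⟩
    exact eq_line h hL hx hy ▸ hz
  · exact fun hz => ⟨_, line_mem_lines h, left_mem_line h, right_mem_line h, hz⟩

end line

def pencil (p : X) : Set (Set X) := {L | L ∈ A.lines ∧ p ∈ L}

theorem encard_le_encard_pencil {L : Set X} (hL : L ∈ A.lines) {r : X} (hr : r ∉ L) :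
    L.encard ≤ (A.pencil r).encard := by
  have hrw : ∀ {w}, w ∈ L → r ≠ w := fun hw hrw => hr (hrw ▸ hw)
  refine Set.encard_le_encard_of_injOn (f := A.line r)
    (fun w hw => ⟨line_mem_lines (hrw hw), left_mem_line (hrw hw)⟩) fun w₁ hw₁ w₂ hw₂ heq => ?_
  have hline : A.line r w₁ ≠ L := ne_of_mem_of_not_mem' (left_mem_line (hrw hw₁)) hr
  exact A.inter_subsingleton _ (line_mem_lines (hrw hw₁)) L hL hline
    ⟨right_mem_line (hrw hw₁), hw₁⟩ ⟨heq ▸ right_mem_line (hrw hw₂), hw₂⟩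

theorem finite_of_finite_pencil (hpencil : ∀ p, (A.pencil p).Finite)
    (hlines : ∀ L ∈ A.lines, L.Finite) : Finite X := by
  rcases isEmpty_or_nonempty X with hX | hX
  · infer_instance
  obtain ⟨p⟩ := hX
  refine Set.finite_univ_iff.1
    (((hpencil p).biUnion fun L hL => hlines L hL.1).insert p |>.subset fun z _ => ?_)
  rcases eq_or_ne p z with rfl | hpz
  · exact Set.mem_insert _ _
  · exact Set.mem_insert_of_mem _ <| Set.mem_biUnion
      (show A.line p z ∈ A.pencil p from ⟨line_mem_lines hpz, left_mem_line hpz⟩)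
      (right_mem_line hpz)

section Nontrivial

variable [Nontrivial X]

theorem exists_line_through (x y : X) : ∃ L ∈ A.lines, x ∈ L ∧ y ∈ L := by
  rcases ne_or_eq x y with h | rfl
  · exact A.exists_line x y h
  · obtain ⟨z, hz⟩ := exists_ne x
    obtain ⟨L, hL, hx, -⟩ := A.exists_line x z hz.symm
    exact ⟨L, hL, hx, hx⟩

theorem collin_of_eq {x y z : X} (h : x = y ∨ x = z ∨ y = z) : Collin A x y z := by
  rcases h with rfl | rfl | rfl
  · obtain ⟨L, hL, hx, hz⟩ := A.exists_line_through x z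
    exact ⟨L, hL, hx, hx, hz⟩
  · obtain ⟨L, hL, hx, hy⟩ := A.exists_line_through x y
    exact ⟨L, hL, hx, hy, hx⟩
  · obtain ⟨L, hL, hx, hy⟩ := A.exists_line_through x y
    exact ⟨L, hL, hx, hy, hy⟩

theorem ne_of_not_collin {x y z : X} (h : ¬Collin A x y z) : x ≠ y ∧ x ≠ z ∧ y ≠ z := by
  simpa only [not_or] using mt A.collin_of_eq h

theorem line_ne_line_of_not_collin {r s t : X} (h : ¬Collin A r s t) :
    A.line r s ≠ A.line r t := fun heq =>
  h ((collin_iff_mem_line (A.ne_of_not_collin h).1).2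
    (heq ▸ right_mem_line (A.ne_of_not_collin h).2.1))

theorem collin_iff_of_mem_union {M L : Set X} (hM : M ∈ A.lines) (hL : L ∈ A.lines)
    {z₁ z₂ z₃ : X} (h₁ : z₁ ∈ M ∪ L) (h₂ : z₂ ∈ M ∪ L) (h₃ : z₃ ∈ M ∪ L) :
    Collin A z₁ z₂ z₃ ↔ (z₁ = z₂ ∨ z₁ = z₃ ∨ z₂ = z₃) ∨
      (z₁ ∈ M ∧ z₂ ∈ M ∧ z₃ ∈ M) ∨ (z₁ ∈ L ∧ z₂ ∈ L ∧ z₃ ∈ L) := by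
  refine ⟨fun hc => ?_, ?_⟩
  · by_cases hd : z₁ = z₂ ∨ z₁ = z₃ ∨ z₂ = z₃
    · exact Or.inl hd
    push Not at hd
    obtain ⟨K, hK, k₁, k₂, k₃⟩ := hc
    have hKML : K = M ∨ K = L := by
      rcases h₁ with p₁ | p₁ <;> rcases h₂ with p₂ | p₂ <;> rcases h₃ with p₃ | p₃ <;>
        first
        | exact Or.inl (A.eq_of_mem_of_mem hK hM hd.1 k₁ k₂ p₁ p₂)
        | exact Or.inl (A.eq_of_mem_of_mem hK hM hd.2.1 k₁ k₃ p₁ p₃)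
        | exact Or.inl (A.eq_of_mem_of_mem hK hM hd.2.2 k₂ k₃ p₂ p₃)
        | exact Or.inr (A.eq_of_mem_of_mem hK hL hd.1 k₁ k₂ p₁ p₂)
        | exact Or.inr (A.eq_of_mem_of_mem hK hL hd.2.1 k₁ k₃ p₁ p₃)
        | exact Or.inr (A.eq_of_mem_of_mem hK hL hd.2.2 k₂ k₃ p₂ p₃)
    rcases hKML with rfl | rfl
    · exact Or.inr (Or.inl ⟨k₁, k₂, k₃⟩)
    · exact Or.inr (Or.inr ⟨k₁, k₂, k₃⟩)
  · rintro (hd | ⟨p₁, p₂, p₃⟩ | ⟨p₁, p₂, p₃⟩)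
    · exact A.collin_of_eq hd
    · exact ⟨M, hM, p₁, p₂, p₃⟩
    · exact ⟨L, hL, p₁, p₂, p₃⟩

theorem collin_iff_collin_of_mem_union {M L : Set X} (hM : M ∈ A.lines) (hL : L ∈ A.lines)
    {S : Set X} (hS : S ⊆ M ∪ L) {f : X → X} (hf : Set.InjOn f S)
    (hfM : ∀ z ∈ S, f z ∈ M ↔ z ∈ M) (hfL : ∀ z ∈ S, f z ∈ L ↔ z ∈ L) :
    ∀ z₁ ∈ S, ∀ z₂ ∈ S, ∀ z₃ ∈ S, Collin A z₁ z₂ z₃ ↔ Collin A (f z₁) (f z₂) (f z₃) := by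
  have hfS : ∀ z ∈ S, f z ∈ M ∪ L := fun z hz => by
    rw [Set.mem_union, hfM z hz, hfL z hz]
    exact hS hz
  intro z₁ h₁ z₂ h₂ z₃ h₃
  rw [A.collin_iff_of_mem_union hM hL (hS h₁) (hS h₂) (hS h₃),
    A.collin_iff_of_mem_union hM hL (hfS z₁ h₁) (hfS z₂ h₂) (hfS z₃ h₃),
    hfM z₁ h₁, hfM z₂ h₂, hfM z₃ h₃, hfL z₁ h₁, hfL z₂ h₂, hfL z₃ h₃,
    hf.eq_iff h₁ h₂, hf.eq_iff h₁ h₃, hf.eq_iff h₂ h₃]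

end Nontrivial

end LinSpace

open LinSpace

section

variable {X : Type u} {A : LinSpace X}

theorem IsAuto.apply_mem_line {g : X → X} (hg : IsAuto A g) {u v : X} (huv : u ≠ v)
    (hu : g u = u) (hv : g v = v) {w : X} (hw : w ∈ A.line u v) : g w ∈ A.line u v := by
  rw [← collin_iff_mem_line huv] at hw ⊢
  simpa only [hu, hv] using (hg.2 u v w).1 hw

theorem IsAuto.apply_eq_of_mem_line_of_mem_line {g : X → X} (hg : IsAuto A g)
    {u₁ v₁ u₂ v₂ z : X} (h₁ : u₁ ≠ v₁) (h₂ : u₂ ≠ v₂) (hne : A.line u₁ v₁ ≠ A.line u₂ v₂)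
    (hu₁ : g u₁ = u₁) (hv₁ : g v₁ = v₁) (hu₂ : g u₂ = u₂) (hv₂ : g v₂ = v₂)
    (hz₁ : z ∈ A.line u₁ v₁) (hz₂ : z ∈ A.line u₂ v₂) : g z = z :=
  A.inter_subsingleton _ (line_mem_lines h₁) _ (line_mem_lines h₂) hne
    ⟨hg.apply_mem_line h₁ hu₁ hv₁ hz₁, hg.apply_mem_line h₂ hu₂ hv₂ hz₂⟩ ⟨hz₁, hz₂⟩

theorem Homogeneous.exists_isAuto_of_subset_union [Nontrivial X] (hA : Homogeneous A)
    {M L : Set X} (hM : M ∈ A.lines) (hL : L ∈ A.lines) {S : Set X} (hSfin : S.Finite)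
    (hS : S ⊆ M ∪ L) {y y' : X} (hyML : y ∈ M ∪ L) (hy : y ∉ S) (hy' : y' ∉ S)
    (hyM : y' ∈ M ↔ y ∈ M) (hyL : y' ∈ L ↔ y ∈ L) :
    ∃ g : X → X, IsAuto A g ∧ g y = y' ∧ ∀ z ∈ S, g z = z := by
  classical
  set f := Function.update id y y'
  have hfy : f y = y' := Function.update_self _ _ _
  have hfS : ∀ z ∈ S, f z = z := fun z hz => Function.update_of_ne (ne_of_mem_of_not_mem hz hy) _ _
  have hinj : Set.InjOn f (insert y S) := by
    rintro z (rfl | hz) w (rfl | hw) hzw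
    · rfl
    · rw [hfy, hfS w hw] at hzw
      exact absurd (hzw ▸ hw) hy'
    · rw [hfy, hfS z hz] at hzw
      exact absurd (hzw ▸ hz) hy'
    · rwa [hfS z hz, hfS w hw] at hzw
  have hfM : ∀ z ∈ insert y S, f z ∈ M ↔ z ∈ M := by
    rintro z (rfl | hz)
    · rwa [hfy]
    · rw [hfS z hz]
  have hfL : ∀ z ∈ insert y S, f z ∈ L ↔ z ∈ L := by
    rintro z (rfl | hz)
    · rwa [hfy]
    · rw [hfS z hz]
  obtain ⟨g, hg, hgf⟩ := hA _ (hSfin.insert y) f hinj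
    (A.collin_iff_collin_of_mem_union hM hL (Set.insert_subset hyML hS) hinj hfM hfL)
  exact ⟨g, hg, (hgf y (Set.mem_insert _ _)).trans hfy,
    fun z hz => (hgf z (Set.mem_insert_of_mem _ hz)).trans (hfS z hz)⟩

namespace IsProjPlane

variable (hA : IsProjPlane A)
include hA

theorem nontrivial : Nontrivial X := by
  obtain ⟨a, b, -, -, hab, -⟩ := hA.2
  exact ⟨⟨a, b, hab⟩⟩

theorem exists_notMem {L : Set X} (hL : L ∈ A.lines) : ∃ r, r ∉ L := by
  obtain ⟨a, b, c, d, hab, hac, -, hbc, -, -, H⟩ := hA.2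
  by_contra! h
  exact H a b c (by simp) (by simp) (by simp) hab hac hbc ⟨L, hL, h a, h b, h c⟩

theorem exists_line_notMem (q : X) : ∃ M ∈ A.lines, q ∉ M := by
  have := hA.nontrivial
  obtain ⟨r, hrq⟩ := exists_ne q
  obtain ⟨s, hs⟩ := hA.exists_notMem (line_mem_lines hrq.symm)
  have hrs : r ≠ s := ne_of_mem_of_not_mem (right_mem_line hrq.symm) hs
  refine ⟨A.line r s, line_mem_lines hrs, fun hq => hs ?_⟩
  rw [← eq_line hrq.symm (line_mem_lines hrs) hq (left_mem_line hrs)]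
  exact right_mem_line hrs

theorem encard_pencil_le {M : Set X} (hM : M ∈ A.lines) {q : X} (hq : q ∉ M) :
    (A.pencil q).encard ≤ M.encard := by
  have := hA.nontrivial
  choose! F hF using fun K (hK : K ∈ A.pencil q) => hA.1 K hK.1 M hM
  refine Set.encard_le_encard_of_injOn (fun K hK => (hF K hK).2) fun K₁ h₁ K₂ h₂ heq => ?_
  by_contra hne
  have hq₁ := A.inter_subsingleton K₁ h₁.1 K₂ h₂.1 hne ⟨h₁.2, h₂.2⟩
    ⟨(hF K₁ h₁).1, heq ▸ (hF K₂ h₂).1⟩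
  exact hq (hq₁ ▸ (hF K₁ h₁).2)

theorem three_le_encard_of_notMem {L : Set X} (hL : L ∈ A.lines) {r s₁ s₂ s₃ : X} (hr : r ∉ L)
    (h₁₂ : ¬Collin A r s₁ s₂) (h₁₃ : ¬Collin A r s₁ s₃) (h₂₃ : ¬Collin A r s₂ s₃) :
    3 ≤ L.encard := by
  have := hA.nontrivial
  have hmem : ∀ {s}, r ≠ s → A.line r s ∈ A.pencil r :=
    fun hrs => ⟨line_mem_lines hrs, left_mem_line hrs⟩
  have hsub : {A.line r s₁, A.line r s₂, A.line r s₃} ⊆ A.pencil r := by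
    simp only [Set.insert_subset_iff, Set.singleton_subset_iff]
    exact ⟨hmem (A.ne_of_not_collin h₁₂).1, hmem (A.ne_of_not_collin h₁₂).2.1,
      hmem (A.ne_of_not_collin h₁₃).2.1⟩
  calc (3 : ℕ∞) = ({A.line r s₁, A.line r s₂, A.line r s₃} : Set (Set X)).encard :=
        (Set.encard_eq_three.2 ⟨_, _, _, A.line_ne_line_of_not_collin h₁₂,
          A.line_ne_line_of_not_collin h₁₃, A.line_ne_line_of_not_collin h₂₃, rfl⟩).symm
    _ ≤ (A.pencil r).encard := Set.encard_mono hsub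
    _ ≤ L.encard := hA.encard_pencil_le hL hr

theorem three_le_encard {L : Set X} (hL : L ∈ A.lines) : 3 ≤ L.encard := by
  obtain ⟨a, b, c, d, hab, hac, had, hbc, hbd, hcd, H⟩ := hA.2
  by_cases ha : a ∉ L
  · exact hA.three_le_encard_of_notMem hL ha
      (H a b c (by simp) (by simp) (by simp) hab hac hbc)
      (H a b d (by simp) (by simp) (by simp) hab had hbd)
      (H a c d (by simp) (by simp) (by simp) hac had hcd)
  by_cases hb : b ∉ L
  · exact hA.three_le_encard_of_notMem hL hb
      (H b a c (by simp) (by simp) (by simp) hab.symm hbc hac)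
      (H b a d (by simp) (by simp) (by simp) hab.symm hbd had)
      (H b c d (by simp) (by simp) (by simp) hbc hbd hcd)
  by_cases hc : c ∉ L
  · exact hA.three_le_encard_of_notMem hL hc
      (H c a b (by simp) (by simp) (by simp) hac.symm hbc.symm hab)
      (H c a d (by simp) (by simp) (by simp) hac.symm hcd had)
      (H c b d (by simp) (by simp) (by simp) hbc.symm hcd hbd)
  push Not at ha hb hc
  exact absurd ⟨L, hL, ha, hb, hc⟩ (H a b c (by simp) (by simp) (by simp) hab hac hbc)

/-- A third point of the line through a point of `L \ M` and a point of `M \ L` avoids both. -/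
theorem exists_notMem_notMem {L M : Set X} (hL : L ∈ A.lines) (hM : M ∈ A.lines) (hLM : L ≠ M) :
    ∃ u, u ∉ L ∧ u ∉ M := by
  obtain ⟨z, hzL, hzM⟩ := A.exists_mem_notMem_of_ne hL hM hLM
  obtain ⟨w, hwM, hwL⟩ := A.exists_mem_notMem_of_ne hM hL hLM.symm
  have hzw : z ≠ w := ne_of_mem_of_not_mem hzL hwL
  obtain ⟨u, hu, huzw⟩ := Set.exists_mem_notMem_of_encard_lt_encard (s := {z, w})
    ((Set.encard_pair hzw).trans_lt
      (lt_of_lt_of_le (by norm_num) (hA.three_le_encard (line_mem_lines hzw))))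
  simp only [Set.mem_insert_iff, Set.mem_singleton_iff, not_or] at huzw
  refine ⟨u, fun huL => huzw.1 ?_, fun huM => huzw.2 ?_⟩
  · exact A.inter_subsingleton _ (line_mem_lines hzw) L hL
      (ne_of_mem_of_not_mem' (right_mem_line hzw) hwL) ⟨hu, huL⟩ ⟨left_mem_line hzw, hzL⟩
  · exact A.inter_subsingleton _ (line_mem_lines hzw) M hM
      (ne_of_mem_of_not_mem' (left_mem_line hzw) hzM) ⟨hu, huM⟩ ⟨right_mem_line hzw, hwM⟩

theorem encard_le_encard {L M : Set X} (hL : L ∈ A.lines) (hM : M ∈ A.lines) :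
    L.encard ≤ M.encard := by
  rcases eq_or_ne L M with rfl | hLM
  · rfl
  obtain ⟨u, huL, huM⟩ := hA.exists_notMem_notMem hL hM hLM
  exact (A.encard_le_encard_pencil hL huL).trans (hA.encard_pencil_le hM huM)

theorem exists_mem_forall_isAuto_fixed {N L : Set X} (hN : N ∈ A.lines) (hL : L ∈ A.lines)
    {a b x c₁ d : X} (haN : a ∈ N) (hbN : b ∈ N) (hxN : x ∈ N) (haL : a ∉ L) (hbL : b ∉ L)
    (hxL : x ∉ L) (hab : a ≠ b) (hax : a ≠ x) (hbx : b ≠ x) (hc₁L : c₁ ∈ L) (hdL : d ∈ L)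
    (hc₁N : c₁ ∉ N) (hdN : d ∉ N) (hc₁d : c₁ ≠ d) :
    ∃ y ∈ L, y ∉ N ∧ y ≠ c₁ ∧ y ≠ d ∧ ∀ g : X → X, IsAuto A g →
      g a = a → g b = b → g x = x → g c₁ = c₁ → g d = d → g y = y := by
  have hxd : x ≠ d := (ne_of_mem_of_not_mem hdL hxL).symm
  have hac₁ : a ≠ c₁ := (ne_of_mem_of_not_mem hc₁L haL).symm
  have hK₁ : A.line x d ∈ A.lines := line_mem_lines hxd
  have hK₂ : A.line a c₁ ∈ A.lines := line_mem_lines hac₁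
  have hK₁N : A.line x d ≠ N := ne_of_mem_of_not_mem' (right_mem_line hxd) hdN
  have hK₂N : A.line a c₁ ≠ N := ne_of_mem_of_not_mem' (right_mem_line hac₁) hc₁N
  have hK₁L : A.line x d ≠ L := ne_of_mem_of_not_mem' (left_mem_line hxd) hxL
  have hK₂L : A.line a c₁ ≠ L := ne_of_mem_of_not_mem' (left_mem_line hac₁) haL
  obtain ⟨p, hpK₁, hpK₂⟩ := hA.1 _ hK₁ _ hK₂
  have hpN : p ∉ N := fun hpN => hax <|
    (A.inter_subsingleton _ hK₂ N hN hK₂N ⟨hpK₂, hpN⟩ ⟨left_mem_line hac₁, haN⟩).symm.trans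
      (A.inter_subsingleton _ hK₁ N hN hK₁N ⟨hpK₁, hpN⟩ ⟨left_mem_line hxd, hxN⟩)
  have hpL : p ∉ L := fun hpL => hc₁d <|
    (A.inter_subsingleton _ hK₂ L hL hK₂L ⟨hpK₂, hpL⟩ ⟨right_mem_line hac₁, hc₁L⟩).symm.trans
      (A.inter_subsingleton _ hK₁ L hL hK₁L ⟨hpK₁, hpL⟩ ⟨right_mem_line hxd, hdL⟩)
  have hpb : p ≠ b := (ne_of_mem_of_not_mem hbN hpN).symm
  have hKb : A.line p b ∈ A.lines := line_mem_lines hpb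
  obtain ⟨y, hyb, hyL⟩ := hA.1 _ hKb L hL
  have hyN : y ∉ N := fun hyN => hbL <|
    A.inter_subsingleton _ hKb N hN (ne_of_mem_of_not_mem' (left_mem_line hpb) hpN)
      ⟨hyb, hyN⟩ ⟨right_mem_line hpb, hbN⟩ ▸ hyL
  -- `y = c₁` would make `bp` the line `ac₁`, forcing `b = a`; likewise `y = d` forces `b = x`.
  have hby : ∀ {u v}, u ≠ v → u ∈ N → v ∉ N → p ∈ A.line u v → y = v → b = u := by
    rintro u v huv huN hvN hpK rfl
    have hKb_eq : A.line p b = A.line u y := A.eq_of_mem_of_mem hKb (line_mem_lines huv)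
      (ne_of_mem_of_not_mem hyL hpL).symm (left_mem_line hpb) hyb hpK (right_mem_line huv)
    exact A.inter_subsingleton _ (line_mem_lines huv) N hN
      (ne_of_mem_of_not_mem' (right_mem_line huv) hvN)
      ⟨hKb_eq ▸ right_mem_line hpb, hbN⟩ ⟨left_mem_line huv, huN⟩
  refine ⟨y, hyL, hyN, fun hy => hab (hby hac₁ haN hc₁N hpK₂ hy).symm,
    fun hy => hbx (hby hxd hxN hdN hpK₁ hy), ?_⟩
  intro g hg hga hgb hgx hgc₁ hgd
  have hK₁K₂ : A.line x d ≠ A.line a c₁ := fun h => hax <|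
    A.inter_subsingleton _ hK₂ N hN hK₂N ⟨h ▸ left_mem_line hxd, hxN⟩ ⟨left_mem_line hac₁, haN⟩
      |>.symm
  have hgp : g p = p :=
    hg.apply_eq_of_mem_line_of_mem_line hxd hac₁ hK₁K₂ hgx hgd hga hgc₁ hpK₁ hpK₂
  have hL_eq : L = A.line c₁ d := eq_line hc₁d hL hc₁L hdL
  exact hg.apply_eq_of_mem_line_of_mem_line hpb hc₁d
    (hL_eq ▸ ne_of_mem_of_not_mem' (right_mem_line hpb) hbL) hgp hgb hgc₁ hgd hyb (hL_eq ▸ hyL)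

theorem encard_le_four (hhom : Homogeneous A) {L : Set X} (hL : L ∈ A.lines) :
    L.encard ≤ 4 := by
  classical
  have := hA.nontrivial
  by_contra! hL4
  have hpick : ∀ {K}, K ∈ A.lines → ∀ T : Finset X, T.card ≤ 4 → ∃ z ∈ K, z ∉ T :=
    fun hK T hT => Set.exists_mem_notMem_of_encard_lt_encard <|
      ((Set.encard_coe_eq_coe_finsetCard T).trans_le (by exact_mod_cast hT)).trans_lt
        (hL4.trans_le (hA.encard_le_encard hL hK))
  obtain ⟨a, haL⟩ := hA.exists_notMem hL
  obtain ⟨c, hcL, -⟩ := hpick hL ∅ (by simp)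
  have hac : a ≠ c := (ne_of_mem_of_not_mem hcL haL).symm
  set N := A.line a c
  have hN : N ∈ A.lines := line_mem_lines hac
  have hNL : ∀ {z}, z ∈ N → z ∈ L → z = c := fun hzN hzL =>
    A.inter_subsingleton N hN L hL (ne_of_mem_of_not_mem' (left_mem_line hac) haL)
      ⟨hzN, hzL⟩ ⟨right_mem_line hac, hcL⟩
  have notL : ∀ {z}, z ∈ N → z ≠ c → z ∉ L := fun hz hzc hzL => hzc (hNL hz hzL)
  have notN : ∀ {z}, z ∈ L → z ≠ c → z ∉ N := fun hz hzc hzN => hzc (hNL hzN hz)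
  obtain ⟨b, hbN, hb⟩ := hpick hN {a, c} (Finset.card_le_two.trans (by norm_num))
  obtain ⟨x, hxN, hx⟩ := hpick hN {a, b, c} (Finset.card_le_three.trans (by norm_num))
  obtain ⟨c₁, hc₁L, hc₁⟩ := hpick hL {c} (by simp)
  obtain ⟨d, hdL, hd⟩ := hpick hL {c, c₁} (Finset.card_le_two.trans (by norm_num))
  simp only [Finset.mem_insert, Finset.mem_singleton, not_or] at hb hx hc₁ hd
  have haN : a ∈ N := left_mem_line hac
  obtain ⟨y, hyL, hyN, hyc₁, hyd, hfix⟩ := hA.exists_mem_forall_isAuto_fixed hN hL haN hbN hxN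
    haL (notL hbN hb.2) (notL hxN hx.2.2) (Ne.symm hb.1) (Ne.symm hx.1) (Ne.symm hx.2.1)
    hc₁L hdL (notN hc₁L hc₁) (notN hdL hd.1) (Ne.symm hd.2)
  obtain ⟨y', hy'L, hy'⟩ := hpick hL {c, c₁, d, y} Finset.card_le_four
  simp only [Finset.mem_insert, Finset.mem_singleton, not_or] at hy'
  set S : Set X := {a, b, x, c₁, d}
  have hS : S ⊆ N ∪ L := by
    rintro z (rfl | rfl | rfl | rfl | rfl)
    exacts [Or.inl haN, Or.inl hbN, Or.inl hxN, Or.inr hc₁L, Or.inr hdL]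
  have notS : ∀ {z}, z ∉ N → z ≠ c₁ → z ≠ d → z ∉ S := by
    rintro z hzN hzc₁ hzd (rfl | rfl | rfl | rfl | rfl)
    exacts [hzN haN, hzN hbN, hzN hxN, hzc₁ rfl, hzd rfl]
  have hy'N := notN hy'L hy'.1
  obtain ⟨g, hg, hgy, hgS⟩ := hhom.exists_isAuto_of_subset_union hN hL (Set.toFinite S) hS
    (Or.inr hyL) (notS hyN hyc₁ hyd) (notS hy'N hy'.2.1 hy'.2.2.1) (iff_of_false hy'N hyN)
    (iff_of_true hy'L hyL)
  exact hy'.2.2.2 <| hgy.symm.trans <| hfix g hg (hgS a (by simp [S])) (hgS b (by simp [S]))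
    (hgS x (by simp [S])) (hgS c₁ (by simp [S])) (hgS d (by simp [S]))

end IsProjPlane

end

/-- A homogeneous projective plane has degree at most 4; in particular it is finite. -/
theorem stmt4 {X : Type u} (A : LinSpace X) (hproj : IsProjPlane A)
    (hhom : Homogeneous A) :
    DegLE A 4 ∧ Finite X := by
  have hline : ∀ L ∈ A.lines, L.encard ≤ 4 := fun L hL => hproj.encard_le_four hhom hL
  have hpencil : ∀ p, (A.pencil p).encard ≤ 4 := fun p => by
    obtain ⟨M, hM, hpM⟩ := hproj.exists_line_notMem p
    exact (hproj.encard_pencil_le hM hpM).trans (hline M hM)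
  exact ⟨⟨hline, hpencil⟩, A.finite_of_finite_pencil
    (fun p => Set.finite_of_encard_le_coe (hpencil p))
    fun L hL => Set.finite_of_encard_le_coe (hline L hL)⟩
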